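/- arXiv:2111.07656 — 4 statements merged into one kernel-verified Lean document; each statement's English description precedes it below -/
import Mathlib

section
/- Let Λ ≥ 1 be a natural number, H a finite set, λ : H → ℕ a level function with 1 ≤ λ(x) ≤ Λ for all x ∈ H, and p₁, p₂ : H → Option H two 'parent' maps such that whenever pᵢ(x) = some y one has λ(y) < λ(x), and such that for every y ∈ H and every level ℓ the number of pairs (x, i) with i ∈ {1,2}, λ(x) = ℓ and pᵢ(x) = some y is at most 5. Let d, δ : H → ℝ be functions satisfying the recursion δ(x) = d(x) + (1/2)·δ̃(p₁(x)) + (1/2)·δ̃(p₂(x)) for all x ∈ H, where δ̃(none) = 0 and δ̃(some y) = δ(y). Then Σ_{x∈H} δ(x)² ≤ 7^{Λ−1} · Σ_{x∈H} d(x)². (This is the abstract form of the stability estimate ‖δ‖_{ℓ²(H)} ≤ 7^{(Λ−1)/2}‖d‖_{ℓ²(H)} relating the hierarchical details d(v,x) to the interpolation differences δ(v,x) on the set H of hanging nodes of a Λ-admissible triangulation, which is the core of Proposition 3.2 comparing the Lagrange interpolation operators on V_T⁰ and V_T.) -/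
/-- Abstract stability estimate `‖δ‖²_{ℓ²(H)} ≤ 7^{Λ-1} ‖d‖²_{ℓ²(H)}` for the
hierarchical recursion `δ(x) = d(x) + δ(p₁ x)/2 + δ(p₂ x)/2` on a finite set of
"hanging nodes" with level function `lam` bounded by `Λ`, strictly decreasing
along the parent maps, and with multiplicity of parents at each level at most 5. -/
theorem hierarchical_detail_bound {H : Type*} [Fintype H] (Λ : ℕ) (hΛ : 1 ≤ Λ)
    (lam : H → ℕ) (hlam : ∀ x, 1 ≤ lam x ∧ lam x ≤ Λ)
    (p₁ p₂ : H → Option H)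
    (hp₁ : ∀ x y, p₁ x = some y → lam y < lam x)
    (hp₂ : ∀ x y, p₂ x = some y → lam y < lam x)
    (hmult : ∀ (y : H) (ℓ : ℕ),
      ({x | lam x = ℓ ∧ p₁ x = some y} : Set H).ncard +
        ({x | lam x = ℓ ∧ p₂ x = some y} : Set H).ncard ≤ 5)
    (d δ : H → ℝ)
    (hrec : ∀ x, δ x = d x + (1 / 2) * ((p₁ x).elim 0 δ)
        + (1 / 2) * ((p₂ x).elim 0 δ)) :
    ∑ x, (δ x) ^ 2 ≤ (7 : ℝ) ^ (Λ - 1) * ∑ x, (d x) ^ 2 := by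
  classical
  set q₁ : H → ℝ := fun x => (p₁ x).elim 0 δ with hq₁def
  set q₂ : H → ℝ := fun x => (p₂ x).elim 0 δ with hq₂def
  -- pointwise weighted Cauchy–Schwarz bound
  have point : ∀ x, δ x ^ 2 ≤ (12/7) * d x ^ 2 + (6/5) * q₁ x ^ 2 + (6/5) * q₂ x ^ 2 := by
    intro x
    have h : δ x = d x + (1 / 2) * q₁ x + (1 / 2) * q₂ x := hrec x
    have hid : (12/7) * d x ^ 2 + (6/5) * q₁ x ^ 2 + (6/5) * q₂ x ^ 2 - δ x ^ 2
        = (1/70) * (5 * d x - 7 * q₁ x) ^ 2 + (1/70) * (5 * d x - 7 * q₂ x) ^ 2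
          + (1/4) * (q₁ x - q₂ x) ^ 2 := by rw [h]; ring
    nlinarith [sq_nonneg (5 * d x - 7 * q₁ x), sq_nonneg (5 * d x - 7 * q₂ x),
      sq_nonneg (q₁ x - q₂ x), hid]
  -- expressing (Option.elim)² as a sum over a filter
  have elim_sq : ∀ o : Option H, (o.elim (0:ℝ) δ) ^ 2
      = ∑ y ∈ Finset.univ.filter (fun y => o = some y), δ y ^ 2 := by
    intro o
    cases o with
    | none => simp
    | some y₀ =>
      have h : Finset.univ.filter (fun y => some y₀ = some y) = {y₀} := by
        ext y; simp [eq_comm]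
      rw [h, Finset.sum_singleton]
      simp
  -- multiplicity hypothesis in Finset form
  have hmult' : ∀ (y : H) (ℓ : ℕ),
      (Finset.univ.filter fun x => lam x = ℓ ∧ p₁ x = some y).card
        + (Finset.univ.filter fun x => lam x = ℓ ∧ p₂ x = some y).card ≤ 5 := by
    intro y ℓ
    have h := hmult y ℓ
    have e1 : ({x | lam x = ℓ ∧ p₁ x = some y} : Set H).ncard
        = (Finset.univ.filter fun x => lam x = ℓ ∧ p₁ x = some y).card := by
      rw [Set.ncard_eq_toFinset_card']; congr 1; ext x; simp
    have e2 : ({x | lam x = ℓ ∧ p₂ x = some y} : Set H).ncard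
        = (Finset.univ.filter fun x => lam x = ℓ ∧ p₂ x = some y).card := by
      rw [Set.ncard_eq_toFinset_card']; congr 1; ext x; simp
    rw [e1, e2] at h; exact h
  -- counting lemma
  have count : ∀ ℓ : ℕ,
      ∑ x ∈ Finset.univ.filter (fun x => lam x = ℓ), (q₁ x ^ 2 + q₂ x ^ 2)
        ≤ 5 * ∑ y ∈ Finset.univ.filter (fun y => lam y < ℓ), δ y ^ 2 := by
    intro ℓ
    have rewrite1 : ∀ (p : H → Option H) (q : H → ℝ), (∀ x, q x = (p x).elim 0 δ) →
        ∑ x ∈ Finset.univ.filter (fun x => lam x = ℓ), q x ^ 2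
        = ∑ y, ((Finset.univ.filter fun x => lam x = ℓ ∧ p x = some y).card : ℝ) * δ y ^ 2 := by
      intro p q hq
      calc ∑ x ∈ Finset.univ.filter (fun x => lam x = ℓ), q x ^ 2
          = ∑ x ∈ Finset.univ.filter (fun x => lam x = ℓ),
              ∑ y ∈ Finset.univ.filter (fun y => p x = some y), δ y ^ 2 :=
            Finset.sum_congr rfl (fun x _ => by rw [hq x]; exact elim_sq (p x))
        _ = ∑ x ∈ Finset.univ.filter (fun x => lam x = ℓ),
              ∑ y, if p x = some y then δ y ^ 2 else 0 := by
            refine Finset.sum_congr rfl fun x _ => ?_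
            rw [Finset.sum_filter]
        _ = ∑ y, ∑ x ∈ Finset.univ.filter (fun x => lam x = ℓ),
              if p x = some y then δ y ^ 2 else 0 := Finset.sum_comm
        _ = ∑ y, ∑ x ∈ (Finset.univ.filter (fun x => lam x = ℓ)).filter
              (fun x => p x = some y), δ y ^ 2 := by
            refine Finset.sum_congr rfl fun y _ => ?_
            simp only [Finset.sum_filter]
        _ = ∑ y, ((Finset.univ.filter fun x => lam x = ℓ ∧ p x = some y).card : ℝ) * δ y ^ 2 := by
            refine Finset.sum_congr rfl fun y _ => ?_
            rw [Finset.sum_const, Finset.filter_filter, nsmul_eq_mul]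
    rw [Finset.sum_add_distrib, rewrite1 p₁ q₁ (fun _ => rfl), rewrite1 p₂ q₂ (fun _ => rfl),
      ← Finset.sum_add_distrib]
    have hcomb : ∀ y : H,
        ((Finset.univ.filter fun x => lam x = ℓ ∧ p₁ x = some y).card : ℝ) * δ y ^ 2
        + ((Finset.univ.filter fun x => lam x = ℓ ∧ p₂ x = some y).card : ℝ) * δ y ^ 2
        = (((Finset.univ.filter fun x => lam x = ℓ ∧ p₁ x = some y).card
            + (Finset.univ.filter fun x => lam x = ℓ ∧ p₂ x = some y).card : ℕ) : ℝ) * δ y ^ 2 := by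
      intro y; push_cast; ring
    calc ∑ y, (((Finset.univ.filter fun x => lam x = ℓ ∧ p₁ x = some y).card : ℝ) * δ y ^ 2
            + ((Finset.univ.filter fun x => lam x = ℓ ∧ p₂ x = some y).card : ℝ) * δ y ^ 2)
        = ∑ y, (((Finset.univ.filter fun x => lam x = ℓ ∧ p₁ x = some y).card
            + (Finset.univ.filter fun x => lam x = ℓ ∧ p₂ x = some y).card : ℕ) : ℝ) * δ y ^ 2 :=
          Finset.sum_congr rfl fun y _ => hcomb y
      _ = ∑ y ∈ Finset.univ.filter (fun y => lam y < ℓ),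
            (((Finset.univ.filter fun x => lam x = ℓ ∧ p₁ x = some y).card
            + (Finset.univ.filter fun x => lam x = ℓ ∧ p₂ x = some y).card : ℕ) : ℝ) * δ y ^ 2 := by
          refine (Finset.sum_subset (Finset.subset_univ _) ?_).symm
          intro y _ hy
          simp only [Finset.mem_filter, Finset.mem_univ, true_and, not_lt] at hy
          have h1 : (Finset.univ.filter fun x => lam x = ℓ ∧ p₁ x = some y) = ∅ := by
            ext x
            simp only [Finset.mem_filter, Finset.mem_univ, true_and, Finset.notMem_empty,
              iff_false, not_and]
            intro hx hpx
            have := hp₁ x y hpx; omega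
          have h2 : (Finset.univ.filter fun x => lam x = ℓ ∧ p₂ x = some y) = ∅ := by
            ext x
            simp only [Finset.mem_filter, Finset.mem_univ, true_and, Finset.notMem_empty,
              iff_false, not_and]
            intro hx hpx
            have := hp₂ x y hpx; omega
          rw [h1, h2]; simp
      _ ≤ ∑ y ∈ Finset.univ.filter (fun y => lam y < ℓ), 5 * δ y ^ 2 := by
          refine Finset.sum_le_sum fun y _ => ?_
          have h5 := hmult' y ℓ
          have h5' : (((Finset.univ.filter fun x => lam x = ℓ ∧ p₁ x = some y).card
            + (Finset.univ.filter fun x => lam x = ℓ ∧ p₂ x = some y).card : ℕ) : ℝ) ≤ 5 := by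
            exact_mod_cast h5
          have := sq_nonneg (δ y)
          nlinarith
      _ = 5 * ∑ y ∈ Finset.univ.filter (fun y => lam y < ℓ), δ y ^ 2 := by
          rw [Finset.mul_sum]
  -- splitting a sum over levels ≤ n+1 into levels ≤ n and level n+1
  have split : ∀ (n : ℕ) (f : H → ℝ),
      ∑ x ∈ Finset.univ.filter (fun x => lam x ≤ n + 1), f x
        = ∑ x ∈ Finset.univ.filter (fun x => lam x ≤ n), f x
          + ∑ x ∈ Finset.univ.filter (fun x => lam x = n + 1), f x := by
    intro n f
    have hu : Finset.univ.filter (fun x => lam x ≤ n + 1)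
        = Finset.univ.filter (fun x => lam x ≤ n) ∪ Finset.univ.filter (fun x => lam x = n + 1) := by
      ext x
      simp only [Finset.mem_filter, Finset.mem_union, Finset.mem_univ, true_and]
      omega
    have hdisj : Disjoint (Finset.univ.filter (fun x => lam x ≤ n))
        (Finset.univ.filter (fun x => lam x = n + 1)) := by
      rw [Finset.disjoint_left]
      intro x hx hx'
      simp only [Finset.mem_filter, Finset.mem_univ, true_and] at hx hx'
      omega
    rw [hu, Finset.sum_union hdisj]
  -- main induction
  have key : ∀ n : ℕ, ∑ x ∈ Finset.univ.filter (fun x => lam x ≤ n + 1), δ x ^ 2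
      ≤ 7 ^ n * ∑ x ∈ Finset.univ.filter (fun x => lam x ≤ n + 1), d x ^ 2 := by
    intro n
    induction n with
    | zero =>
      simp only [pow_zero, one_mul, Nat.zero_add]
      refine Finset.sum_le_sum fun x hx => ?_
      simp only [Finset.mem_filter, Finset.mem_univ, true_and] at hx
      have h1 : p₁ x = none := by
        cases hp : p₁ x with
        | none => rfl
        | some y =>
          have := hp₁ x y hp
          have := (hlam y).1
          omega
      have h2 : p₂ x = none := by
        cases hp : p₂ x with
        | none => rfl
        | some y =>
          have := hp₂ x y hp
          have := (hlam y).1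
          omega
      have h := hrec x
      rw [h1, h2] at h
      simp at h
      rw [h]
    | succ n ih =>
      rw [split (n + 1) (fun x => δ x ^ 2), split (n + 1) (fun x => d x ^ 2)]
      have hlt : Finset.univ.filter (fun y => lam y < n + 1 + 1)
          = Finset.univ.filter (fun y => lam y ≤ n + 1) := by
        ext y
        simp only [Finset.mem_filter, Finset.mem_univ, true_and]
        omega
      have hS : ∑ x ∈ Finset.univ.filter (fun x => lam x = n + 1 + 1), δ x ^ 2
          ≤ (12/7) * ∑ x ∈ Finset.univ.filter (fun x => lam x = n + 1 + 1), d x ^ 2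
            + 6 * ∑ x ∈ Finset.univ.filter (fun x => lam x ≤ n + 1), δ x ^ 2 := by
        have hc := count (n + 1 + 1)
        rw [hlt] at hc
        calc ∑ x ∈ Finset.univ.filter (fun x => lam x = n + 1 + 1), δ x ^ 2
            ≤ ∑ x ∈ Finset.univ.filter (fun x => lam x = n + 1 + 1),
                ((12/7) * d x ^ 2 + (6/5) * q₁ x ^ 2 + (6/5) * q₂ x ^ 2) :=
              Finset.sum_le_sum fun x _ => point x
          _ = (12/7) * ∑ x ∈ Finset.univ.filter (fun x => lam x = n + 1 + 1), d x ^ 2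
              + (6/5) * ∑ x ∈ Finset.univ.filter (fun x => lam x = n + 1 + 1),
                  (q₁ x ^ 2 + q₂ x ^ 2) := by
              rw [Finset.mul_sum, Finset.mul_sum, ← Finset.sum_add_distrib]
              exact Finset.sum_congr rfl fun x _ => by ring
          _ ≤ (12/7) * ∑ x ∈ Finset.univ.filter (fun x => lam x = n + 1 + 1), d x ^ 2
              + (6/5) * (5 * ∑ y ∈ Finset.univ.filter (fun y => lam y ≤ n + 1), δ y ^ 2) := by
              have : (0:ℝ) < 6/5 := by norm_num
              nlinarith [hc]
          _ = (12/7) * ∑ x ∈ Finset.univ.filter (fun x => lam x = n + 1 + 1), d x ^ 2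
              + 6 * ∑ x ∈ Finset.univ.filter (fun x => lam x ≤ n + 1), δ x ^ 2 := by ring
      have hBnonneg : (0:ℝ) ≤ ∑ x ∈ Finset.univ.filter (fun x => lam x ≤ n + 1), d x ^ 2 :=
        Finset.sum_nonneg fun x _ => sq_nonneg _
      have hDnonneg : (0:ℝ) ≤ ∑ x ∈ Finset.univ.filter (fun x => lam x = n + 1 + 1), d x ^ 2 :=
        Finset.sum_nonneg fun x _ => sq_nonneg _
      have h7 : (7:ℝ) ≤ 7 ^ (n + 1) := by
        calc (7:ℝ) = 7 ^ 1 := (pow_one 7).symm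
          _ ≤ 7 ^ (n + 1) := pow_le_pow_right₀ (by norm_num) (by omega)
      have hps : (7:ℝ) ^ (n + 1) = 7 * 7 ^ n := by ring
      have h1 : (0:ℝ) ≤ ((7:ℝ) ^ (n + 1) - 12/7)
          * ∑ x ∈ Finset.univ.filter (fun x => lam x = n + 1 + 1), d x ^ 2 :=
        mul_nonneg (by linarith) hDnonneg
      nlinarith [ih, hS, h1, hps]
  obtain ⟨n, rfl⟩ : ∃ n, Λ = n + 1 := ⟨Λ - 1, by omega⟩
  have huniv : Finset.univ.filter (fun x => lam x ≤ n + 1) = Finset.univ := by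
    ext x
    simp only [Finset.mem_filter, Finset.mem_univ, true_and, iff_true]
    exact (hlam x).2
  have hkey := key n
  rw [huniv] at hkey
  simpa using hkey
end

section
/- Let Λ ≥ 1 be a natural number, D a finite subset of the open real interval (0,1), and λ : D → ℕ with 1 ≤ λ(x) ≤ Λ for all x ∈ D; extend λ to D ∪ {0,1} by λ(0) = λ(1) = 0. Assume that for every x ∈ D there exist x′, x″ ∈ D ∪ {0,1} with x = (x′ + x″)/2 and λ(x) = max(λ(x′), λ(x″)) + 1. Then the cardinality of D is at most 2^Λ − 1. (This is Remark 2.3(i): a side of a triangle in a Λ-admissible partition contains at most 2^Λ − 1 hanging nodes.) -/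
/-- Remark 2.3(i): a side of a triangle in a `Λ`-admissible partition contains
at most `2^Λ - 1` hanging nodes. -/
theorem card_hanging_nodes_le (Λ : ℕ) (hΛ : 1 ≤ Λ)
    (D : Finset ℝ) (hD : (D : Set ℝ) ⊆ Set.Ioo (0 : ℝ) 1)
    (lam : ℝ → ℕ) (h0 : lam 0 = 0) (h1 : lam 1 = 0)
    (hlam : ∀ x ∈ D, 1 ≤ lam x ∧ lam x ≤ Λ)
    (hmid : ∀ x ∈ D, ∃ x' x'', x' ∈ ((D : Set ℝ) ∪ {0, 1}) ∧
      x'' ∈ ((D : Set ℝ) ∪ {0, 1}) ∧ x = (x' + x'') / 2 ∧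
      lam x = max (lam x') (lam x'') + 1) :
    D.card ≤ 2 ^ Λ - 1 := by
  -- every point of index n is of the form m / 2^n
  have key : ∀ n : ℕ, ∀ x, x ∈ ((D : Set ℝ) ∪ {0, 1}) → lam x = n →
      ∃ m : ℤ, x * 2 ^ n = (m : ℝ) := by
    intro n
    induction n using Nat.strong_induction_on with
    | _ n ih =>
      intro x hx hxn
      rcases hx with hxD | hx01
      · obtain ⟨x', x'', h1', h2', hmidx, hlamx⟩ := hmid x hxD
        have hn : n = max (lam x') (lam x'') + 1 := by rw [← hxn, hlamx]
        have hl1 : lam x' < n := by omega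
        have hl2 : lam x'' < n := by omega
        obtain ⟨m', hm'⟩ := ih (lam x') hl1 x' h1' rfl
        obtain ⟨m'', hm''⟩ := ih (lam x'') hl2 x'' h2' rfl
        refine ⟨m' * 2 ^ (n - 1 - lam x') + m'' * 2 ^ (n - 1 - lam x''), ?_⟩
        have e1 : x * 2 ^ n = x' * 2 ^ (n - 1) + x'' * 2 ^ (n - 1) := by
          have h2n : (2 : ℝ) ^ n = 2 * 2 ^ (n - 1) := by
            rw [← pow_succ']
            congr 1
            omega
          rw [hmidx, h2n]; ring
        have e2 : x' * 2 ^ (n - 1) = (m' : ℝ) * 2 ^ (n - 1 - lam x') := by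
          have : (2 : ℝ) ^ (n - 1) = 2 ^ (lam x') * 2 ^ (n - 1 - lam x') := by
            rw [← pow_add]
            congr 1
            omega
          rw [this, ← mul_assoc, hm']
        have e3 : x'' * 2 ^ (n - 1) = (m'' : ℝ) * 2 ^ (n - 1 - lam x'') := by
          have : (2 : ℝ) ^ (n - 1) = 2 ^ (lam x'') * 2 ^ (n - 1 - lam x'') := by
            rw [← pow_add]
            congr 1
            omega
          rw [this, ← mul_assoc, hm'']
        rw [e1, e2, e3]
        push_cast
        ring
      · rcases hx01 with h | h
        · exact ⟨0, by simp [h]⟩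
        · refine ⟨2 ^ n, ?_⟩
          simp only [Set.mem_singleton_iff] at h
          simp [h]
  -- D injects into the integers in (0, 2^Λ)
  have hsub : D ⊆ (Finset.Ioo (0 : ℤ) (2 ^ Λ)).image (fun m : ℤ => (m : ℝ) / 2 ^ Λ) := by
    intro x hxD
    obtain ⟨m, hm⟩ := key (lam x) x (Or.inl hxD) rfl
    have hle : lam x ≤ Λ := (hlam x hxD).2
    have hM : x * 2 ^ Λ = ((m * 2 ^ (Λ - lam x) : ℤ) : ℝ) := by
      have : (2 : ℝ) ^ Λ = 2 ^ (lam x) * 2 ^ (Λ - lam x) := by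
        rw [← pow_add]; congr 1; omega
      rw [this, ← mul_assoc, hm]
      push_cast
      ring
    set M : ℤ := m * 2 ^ (Λ - lam x) with hMdef
    have hx01 := hD hxD
    have hpow : (0 : ℝ) < 2 ^ Λ := by positivity
    have hMpos : (0 : ℝ) < (M : ℝ) := by
      rw [← hM]; exact mul_pos hx01.1 hpow
    have hMlt : (M : ℝ) < 2 ^ Λ := by
      rw [← hM]
      calc x * 2 ^ Λ < 1 * 2 ^ Λ := by
            exact mul_lt_mul_of_pos_right hx01.2 hpow
        _ = 2 ^ Λ := one_mul _
    refine Finset.mem_image.mpr ⟨M, ?_, ?_⟩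
    · rw [Finset.mem_Ioo]
      constructor
      · exact_mod_cast hMpos
      · have : ((M : ℝ)) < ((2 ^ Λ : ℤ) : ℝ) := by push_cast; exact hMlt
        exact_mod_cast this
    · field_simp
      linarith [hM]
  calc D.card ≤ ((Finset.Ioo (0 : ℤ) (2 ^ Λ)).image (fun m : ℤ => (m : ℝ) / 2 ^ Λ)).card :=
        Finset.card_le_card hsub
    _ ≤ (Finset.Ioo (0 : ℤ) (2 ^ Λ)).card := Finset.card_image_le
    _ = 2 ^ Λ - 1 := by
        rw [Int.card_Ioo]
        have h2 : (2 : ℤ) ^ Λ = ((2 ^ Λ : ℕ) : ℤ) := by push_cast; ring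
        omega
end

section
/- Let Λ ≥ 1 be a natural number, D a finite subset of the open real interval (0,1), and λ : D → ℕ with 1 ≤ λ(x) ≤ Λ for all x ∈ D; extend λ to D ∪ {0,1} by λ(0) = λ(1) = 0. Assume that for every x ∈ D there exist x′, x″ ∈ D ∪ {0,1} with x = (x′ + x″)/2 and λ(x) = max(λ(x′), λ(x″)) + 1. Then any two distinct points of D ∪ {0,1} are at distance at least 2^{−Λ} from each other. (This underlies Remark 2.3(ii): each edge e of an element E of a Λ-admissible partition satisfies h_e ≳ 2^{−Λ} h_E.) -/
/-- Remark 2.3(ii): any two distinct nodes among the hanging nodes and the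
endpoints of a side of a `Λ`-admissible partition are at distance at least
`2^{-Λ}`. -/
theorem hanging_nodes_separation (Λ : ℕ) (hΛ : 1 ≤ Λ)
    (D : Finset ℝ) (hD : (D : Set ℝ) ⊆ Set.Ioo (0 : ℝ) 1)
    (lam : ℝ → ℕ) (h0 : lam 0 = 0) (h1 : lam 1 = 0)
    (hlam : ∀ x ∈ D, 1 ≤ lam x ∧ lam x ≤ Λ)
    (hmid : ∀ x ∈ D, ∃ x' x'', x' ∈ ((D : Set ℝ) ∪ {0, 1}) ∧
      x'' ∈ ((D : Set ℝ) ∪ {0, 1}) ∧ x = (x' + x'') / 2 ∧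
      lam x = max (lam x') (lam x'') + 1) :
    ∀ x ∈ ((D : Set ℝ) ∪ {0, 1}), ∀ y ∈ ((D : Set ℝ) ∪ {0, 1}),
      x ≠ y → 1 / 2 ^ Λ ≤ |x - y| := by
  have key : ∀ n : ℕ, ∀ x ∈ ((D : Set ℝ) ∪ {0, 1}), lam x ≤ n →
      ∃ k : ℤ, x * 2 ^ n = (k : ℝ) := by
    intro n
    induction n with
    | zero =>
      intro x hx hle
      rcases hx with hx | hx
      · exact absurd (le_trans (hlam x hx).1 hle) (by norm_num)
      · rcases hx with rfl | hx
        · exact ⟨0, by norm_num⟩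
        · simp only [Set.mem_singleton_iff] at hx
          subst hx; exact ⟨1, by norm_num⟩
    | succ n ih =>
      intro x hx hle
      rcases Nat.lt_or_ge (lam x) (n+1) with h | h
      · obtain ⟨k, hk⟩ := ih x hx (Nat.lt_succ_iff.mp h)
        exact ⟨2 * k, by push_cast; rw [pow_succ]; rw [← hk]; ring⟩
      · have hlamx : lam x = n + 1 := le_antisymm hle h
        have hxD : x ∈ D := by
          rcases hx with hx | hx
          · exact hx
          · exfalso
            rcases hx with rfl | hx
            · omega
            · simp only [Set.mem_singleton_iff] at hx; subst hx; omega
        obtain ⟨x', x'', hx', hx'', hmideq, hlameq⟩ := hmid x hxD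
        have h1' : lam x' ≤ n := by omega
        have h2' : lam x'' ≤ n := by omega
        obtain ⟨k', hk'⟩ := ih x' hx' h1'
        obtain ⟨k'', hk''⟩ := ih x'' hx'' h2'
        refine ⟨k' + k'', ?_⟩
        rw [hmideq]
        push_cast
        rw [← hk', ← hk'', pow_succ]
        ring
  intro x hx y hy hne
  have hlx : lam x ≤ Λ := by
    rcases hx with h | h
    · exact (hlam x h).2
    · rcases h with rfl | h
      · omega
      · simp only [Set.mem_singleton_iff] at h; subst h; omega
  have hly : lam y ≤ Λ := by
    rcases hy with h | h
    · exact (hlam y h).2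
    · rcases h with rfl | h
      · omega
      · simp only [Set.mem_singleton_iff] at h; subst h; omega
  obtain ⟨k, hk⟩ := key Λ x hx hlx
  obtain ⟨m, hm⟩ := key Λ y hy hly
  have hpow : (0 : ℝ) < 2 ^ Λ := by positivity
  have hkm : k ≠ m := by
    intro hkm
    apply hne
    have : x * 2 ^ Λ = y * 2 ^ Λ := by rw [hk, hm, hkm]
    exact mul_right_cancel₀ (ne_of_gt hpow) this
  have h1le : (1 : ℝ) ≤ |(k : ℝ) - m| := by
    have : (1 : ℤ) ≤ |k - m| := Int.one_le_abs (sub_ne_zero.mpr hkm)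
    calc (1 : ℝ) = ((1 : ℤ) : ℝ) := by norm_num
    _ ≤ ((|k - m| : ℤ) : ℝ) := by exact_mod_cast this
    _ = |(k : ℝ) - m| := by push_cast [Int.cast_abs]; ring_nf
  have : |x - y| * 2 ^ Λ = |(k : ℝ) - m| := by
    rw [← abs_of_pos hpow, ← abs_mul, sub_mul, hk, hm]
  rw [div_le_iff₀ hpow, this]
  exact h1le
end

section
/- Let δ ∈ (0, 1/4], C_E ≥ 0, D₀ ≥ 0 and γ > 0 with γ² ≥ C_E · D₀ · (1 + δ)/δ². Let e, e*, E, S, S* ≥ 0 be real numbers satisfying: (i) e*² ≤ (1 + δ) e² − E² + C_E (1 + 1/δ)(S + S*); (ii) S ≤ (D₀/γ²) e²; (iii) S* ≤ (D₀/γ²) e*². Then e*² ≤ (1 + 4δ) e² − E². (This is the arithmetic content of Corollary 5.6, quasi-orthogonality of energy errors without stabilization: for γ at least the threshold γ_δ with γ_δ² = C_E C_B (1+δ)/(C_L c_B δ²), the stabilization terms can be absorbed, yielding |||u − u*|||² ≤ (1+4δ)|||u − u_T|||² − |||u* − u_T|||².) -/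
/-- Arithmetic content of Corollary 5.6 (quasi-orthogonality of energy errors
without stabilization). -/
theorem quasi_orthogonality_no_stab (δ C_E D₀ γ e es E S Ss : ℝ)
    (hδ0 : 0 < δ) (hδ1 : δ ≤ 1 / 4)
    (hCE : 0 ≤ C_E) (hD0 : 0 ≤ D₀) (hγ : 0 < γ)
    (hγ2 : γ ^ 2 ≥ C_E * D₀ * (1 + δ) / δ ^ 2)
    (he : 0 ≤ e) (hes : 0 ≤ es) (hE : 0 ≤ E) (hS : 0 ≤ S) (hSs : 0 ≤ Ss)
    (h1 : es ^ 2 ≤ (1 + δ) * e ^ 2 - E ^ 2 + C_E * (1 + 1 / δ) * (S + Ss))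
    (h2 : S ≤ (D₀ / γ ^ 2) * e ^ 2)
    (h3 : Ss ≤ (D₀ / γ ^ 2) * es ^ 2) :
    es ^ 2 ≤ (1 + 4 * δ) * e ^ 2 - E ^ 2 := by
  set a : ℝ := C_E * (1 + 1 / δ) * (D₀ / γ ^ 2) with ha
  have hγ2pos : (0:ℝ) < γ ^ 2 := by positivity
  have ha0 : 0 ≤ a := by positivity
  have haδ : a ≤ δ := by
    have h2' : C_E * D₀ * (1 + δ) ≤ γ ^ 2 * δ ^ 2 := (div_le_iff₀ (by positivity)).mp hγ2
    have heq : a * (γ ^ 2 * δ) = C_E * D₀ * (1 + δ) := by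
      rw [ha]; field_simp; ring
    nlinarith [mul_pos hγ2pos hδ0]
  have key : es ^ 2 ≤ (1 + δ) * e ^ 2 - E ^ 2 + a * e ^ 2 + a * es ^ 2 := by
    have hc : 0 ≤ C_E * (1 + 1 / δ) := by positivity
    nlinarith [mul_le_mul_of_nonneg_left h2 hc, mul_le_mul_of_nonneg_left h3 hc]
  nlinarith [sq_nonneg es, sq_nonneg e, mul_nonneg ha0 (sq_nonneg es), mul_nonneg ha0 (sq_nonneg e), mul_le_mul_of_nonneg_right haδ (sq_nonneg es), mul_le_mul_of_nonneg_right haδ (sq_nonneg e)]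
end
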